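/- arXiv:1704.03354 — 4 statements merged into one kernel-verified Lean document; each statement's English description precedes it below -/
import Mathlib

section
/- If the multiplicative advantage of MAP estimation of D from Y over random guessing exceeds 1+ε, i.e. (Σ_y max_d p_{D|Y}(d|y) p_Y(y)) / (max_d p_D(d)) > 1+ε, then for every target distribution p_T on Y there exist y and d such that |p_{Y|D}(y|d)/p_T(y) − 1| > ε. -/
open Real BigOperators Finset

/-- If the multiplicative advantage of MAP estimation of `D` from `Y` over random
guessing exceeds `1 + ε`, then for every target distribution `pT` on `Y` there exist
`y` and `d` with `|p_{Y|D}(y|d)/pT(y) - 1| > ε`. -/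
theorem map_advantage_implies_discrimination
    {D Y : Type*} [Fintype D] [Fintype Y] [Nonempty D] [Nonempty Y]
    (p : D → Y → ℝ) (hp : ∀ d y, 0 ≤ p d y) (hpsum : ∑ d, ∑ y, p d y = 1)
    (pD : D → ℝ) (hpD : ∀ d, pD d = ∑ y, p d y)
    (pY : Y → ℝ) (hpY : ∀ y, pY y = ∑ d, p d y)
    (hpYpos : ∀ y, 0 < pY y) (hpDpos : ∀ d, 0 < pD d)
    (ε : ℝ) (hε : 0 < ε)
    (pT : Y → ℝ) (hpT : ∀ y, 0 < pT y) (hpTsum : ∑ y, pT y = 1)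
    (hadv : (∑ y, pY y * (Finset.univ.sup' Finset.univ_nonempty fun d => p d y / pY y)) /
        (Finset.univ.sup' Finset.univ_nonempty fun d => pD d) > 1 + ε) :
    ∃ y : Y, ∃ d : D, |p d y / pD d / pT y - 1| > ε := by
  by_contra hcon
  push_neg at hcon
  set M : ℝ := Finset.univ.sup' Finset.univ_nonempty fun d => pD d with hM
  have hMpos : 0 < M := lt_of_lt_of_le (hpDpos (Classical.arbitrary D))
    (Finset.le_sup' _ (Finset.mem_univ _))
  -- each p d y ≤ (1+ε) * pT y * M
  have key : ∀ y d, p d y ≤ (1 + ε) * pT y * M := by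
    intro y d
    have h1 : |p d y / pD d / pT y - 1| ≤ ε := hcon y d
    have h2 : p d y / pD d / pT y ≤ 1 + ε := by
      have := abs_le.mp h1
      linarith [this.2]
    have hpDd := hpDpos d
    have hpTy := hpT y
    have h3 : p d y ≤ (1 + ε) * (pD d * pT y) := by
      rw [div_div] at h2
      exact (div_le_iff₀ (by positivity)).mp h2
    have hdM : pD d ≤ M := Finset.le_sup' _ (Finset.mem_univ d)
    nlinarith [mul_le_mul_of_nonneg_left hdM (by positivity : (0:ℝ) ≤ (1 + ε) * pT y)]
  -- bound each summand
  have hterm : ∀ y, pY y * (Finset.univ.sup' Finset.univ_nonempty fun d => p d y / pY y)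
      ≤ (1 + ε) * pT y * M := by
    intro y
    have hy := hpYpos y
    have hsup : (Finset.univ.sup' Finset.univ_nonempty fun d => p d y / pY y)
        ≤ ((1 + ε) * pT y * M) / pY y := by
      apply Finset.sup'_le
      intro d _
      gcongr
      exact key y d
    calc pY y * (Finset.univ.sup' Finset.univ_nonempty fun d => p d y / pY y)
        ≤ pY y * (((1 + ε) * pT y * M) / pY y) := by
          exact mul_le_mul_of_nonneg_left hsup hy.le
      _ = (1 + ε) * pT y * M := by field_simp
  have hsum : (∑ y, pY y * (Finset.univ.sup' Finset.univ_nonempty fun d => p d y / pY y))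
      ≤ (1 + ε) * M := by
    calc (∑ y, pY y * (Finset.univ.sup' Finset.univ_nonempty fun d => p d y / pY y))
        ≤ ∑ y, (1 + ε) * pT y * M := Finset.sum_le_sum fun y _ => hterm y
      _ = (1 + ε) * M * ∑ y, pT y := by rw [Finset.mul_sum]; congr 1; ext y; ring
      _ = (1 + ε) * M := by rw [hpTsum, mul_one]
  have : (∑ y, pY y * (Finset.univ.sup' Finset.univ_nonempty fun d => p d y / pY y)) / M
      ≤ 1 + ε := by
    rw [div_le_iff₀ hMpos]
    linarith
  linarith [hadv]
end

section
/- For pmfs p, q on a finite set with D_KL(p‖q) ≤ τ where 0 < τ ≤ min_x p(x)(1−p(x))/(3(1+p(x))²), and assuming γ₁·r(x) ≤ p(x) ≤ γ₂·r(x) for all x for a third pmf r, it holds for all x that γ₁·exp(−√(3τ/p_m)) ≤ q(x)/r(x) ≤ γ₂·exp(√(3τ/p_m)), where p_m = min_x p(x) > 0. -/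
open Real BigOperators Finset

lemma lemA (m : ℝ) (hm : 0 ≤ m) : m ^ 2 / 3 ≤ Real.exp m - m - 1 := by
  have h := Real.add_one_le_exp (m / 3)
  have hb : (0:ℝ) ≤ 1 + m / 3 := by linarith
  have h3 : Real.exp m = Real.exp (m / 3) ^ 3 := by
    rw [← Real.exp_nat_mul]; norm_num; ring_nf
  have hc : (1 + m / 3) ^ 3 ≤ Real.exp (m / 3) ^ 3 := by
    apply pow_le_pow_left₀ hb (by linarith) 3
  rw [h3]
  nlinarith [sq_nonneg m, pow_nonneg hm 3]

lemma lemB (L : ℝ) (h0 : 0 ≤ L) (h1 : L ≤ 1) : L ^ 2 / 3 ≤ Real.exp (-L) + L - 1 := by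
  have h := Real.add_one_le_exp (-L / 6)
  have hb : (0:ℝ) ≤ 1 - L / 6 := by linarith
  have h6 : Real.exp (-L) = Real.exp (-L / 6) ^ 6 := by
    rw [← Real.exp_nat_mul]; norm_num; ring_nf
  have hc : (1 - L / 6) ^ 6 ≤ Real.exp (-L / 6) ^ 6 := by
    apply pow_le_pow_left₀ hb (by linarith) 6
  rw [h6]
  nlinarith [sq_nonneg L, sq_nonneg (1 - L), mul_nonneg (sq_nonneg L) h0,
    mul_nonneg (mul_nonneg h0 h0) (sub_nonneg.2 h1),
    mul_nonneg (mul_nonneg (sq_nonneg L) h0) (sub_nonneg.2 h1),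
    mul_nonneg (mul_nonneg (sq_nonneg L) (sq_nonneg L)) (sub_nonneg.2 h1)]

lemma lemC (L : ℝ) (h1 : 1 ≤ L) : (1:ℝ) / 3 < Real.exp (-L) + L - 1 := by
  have h := Real.add_one_le_exp (1 - L)
  have he : Real.exp (1 - L) = Real.exp 1 * Real.exp (-L) := by
    rw [← Real.exp_add]; ring_nf
  have h1lt := Real.exp_one_lt_d9
  have hpos := Real.exp_pos (-L)
  nlinarith [mul_pos (Real.exp_pos 1) hpos, (Real.exp_pos 1)]

set_option maxHeartbeats 800000 in
/-- Robustness lemma: if `D_KL(p‖q) ≤ τ ≤ min_x p(x)(1-p(x))/(3(1+p(x))²)` and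
`γ₁ ≤ p(x)/r(x) ≤ γ₂` for all `x`, then for all `x`,
`γ₁ exp(-√(3τ/p_m)) ≤ q(x)/r(x) ≤ γ₂ exp(√(3τ/p_m))` with `p_m = min_x p(x)`. -/
theorem kl_ratio_robustness
    {X : Type*} [Fintype X] [Nonempty X]
    (p q r : X → ℝ) (τ γ₁ γ₂ : ℝ)
    (hp : ∀ x, 0 < p x) (hq : ∀ x, 0 < q x) (hr : ∀ x, 0 < r x)
    (hpsum : ∑ x, p x = 1) (hqsum : ∑ x, q x = 1) (hrsum : ∑ x, r x = 1)
    (hKL : ∑ x, p x * Real.log (p x / q x) ≤ τ)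
    (hτpos : 0 < τ)
    (hτ : τ ≤ Finset.univ.inf' Finset.univ_nonempty
      fun x => p x * (1 - p x) / (3 * (1 + p x) ^ 2))
    (hγ : ∀ x, γ₁ ≤ p x / r x ∧ p x / r x ≤ γ₂) :
    ∀ x,
      γ₁ * Real.exp (-Real.sqrt (3 * τ /
          (Finset.univ.inf' Finset.univ_nonempty fun x' => p x'))) ≤ q x / r x ∧
      q x / r x ≤ γ₂ * Real.exp (Real.sqrt (3 * τ /
          (Finset.univ.inf' Finset.univ_nonempty fun x' => p x'))) := by
  classical
  intro x
  set pm : ℝ := Finset.univ.inf' Finset.univ_nonempty fun x' => p x' with hpm_def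
  have hpm_pos : 0 < pm := by
    obtain ⟨y, -, hy⟩ := Finset.exists_mem_eq_inf' Finset.univ_nonempty (fun x' => p x')
    rw [hpm_def, hy]; exact hp y
  have hpm_le : pm ≤ p x := Finset.inf'_le _ (Finset.mem_univ x)
  have hc1 : τ ≤ p x * (1 - p x) / (3 * (1 + p x) ^ 2) :=
    le_trans hτ (Finset.inf'_le _ (Finset.mem_univ x))
  set s : ℝ := Real.sqrt (3 * τ / pm) with hs_def
  have hs_nonneg : 0 ≤ s := Real.sqrt_nonneg _
  set L : ℝ := Real.log (p x / q x) with hL_def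
  have hpq_pos : 0 < p x / q x := div_pos (hp x) (hq x)
  have hE : Real.exp (-L) = q x / p x := by
    rw [hL_def, ← Real.log_inv, Real.exp_log (by positivity)]
    rw [inv_div]
  -- pointwise lower bound on each KL term
  have hterm : ∀ y, p y - q y ≤ p y * Real.log (p y / q y) := by
    intro y
    have h := Real.log_le_sub_one_of_pos (div_pos (hq y) (hp y))
    have hinv : Real.log (p y / q y) = - Real.log (q y / p y) := by
      rw [← Real.log_inv, inv_div]
    rw [hinv]
    have hpy := hp y
    have : p y * (q y / p y) = q y := by field_simp
    nlinarith [hp y, hq y]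
  -- sum bound
  have hkey : p x * (L + Real.exp (-L) - 1) ≤ τ := by
    have h1 : ∑ y ∈ Finset.univ.erase x, (p y - q y) ≤
        ∑ y ∈ Finset.univ.erase x, p y * Real.log (p y / q y) :=
      Finset.sum_le_sum fun y _ => hterm y
    have h2 : ∑ y ∈ Finset.univ.erase x, (p y - q y) = q x - p x := by
      rw [Finset.sum_sub_distrib, Finset.sum_erase_eq_sub (Finset.mem_univ x),
        Finset.sum_erase_eq_sub (Finset.mem_univ x), hpsum, hqsum]
      ring
    have h3 : ∑ y ∈ Finset.univ.erase x, p y * Real.log (p y / q y) =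
        (∑ y, p y * Real.log (p y / q y)) - p x * L := by
      rw [Finset.sum_erase_eq_sub (Finset.mem_univ x)]
    rw [hE]
    have hqp : p x * (q x / p x) = q x := by
      rw [mul_div_assoc']; exact mul_div_cancel_left₀ _ (hp x).ne'
    nlinarith [hp x, hqp]
  have hpx := hp x
  clear_value pm s L
  -- case analysis to get exp(-s) ≤ q x / p x ≤ exp s
  have hmain : Real.exp (-s) ≤ q x / p x ∧ q x / p x ≤ Real.exp s := by
    rcases le_or_gt L 0 with hL0 | hL0
    · -- L ≤ 0, m = -L ≥ 0
      have hm := lemA (-L) (by linarith)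
      have hsq : (-L) ^ 2 ≤ 3 * τ / pm := by
        have h' : p x * ((-L) ^ 2 / 3) ≤ τ := by nlinarith
        rw [le_div_iff₀ hpm_pos]
        nlinarith [mul_nonneg (sub_nonneg.2 hpm_le) (sq_nonneg L)]
      have hmle : -L ≤ s := by
        rw [hs_def]
        exact (Real.le_sqrt (by linarith) (by positivity)).2 hsq
      constructor
      · rw [← hE]
        have : -s ≤ -L := by linarith
        calc Real.exp (-s) ≤ Real.exp L := Real.exp_le_exp.2 (by linarith)
          _ ≤ Real.exp (-L) := Real.exp_le_exp.2 (by linarith)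
      · rw [← hE]; exact Real.exp_le_exp.2 (by linarith)
    · rcases le_or_gt L 1 with hL1 | hL1
      · have hm := lemB L (le_of_lt hL0) hL1
        have hsq : L ^ 2 ≤ 3 * τ / pm := by
          have h' : p x * (L ^ 2 / 3) ≤ τ := by nlinarith
          rw [le_div_iff₀ hpm_pos]
          nlinarith [mul_nonneg (sub_nonneg.2 hpm_le) (sq_nonneg L)]
        have hmle : L ≤ s := by
          rw [hs_def]
          exact (Real.le_sqrt (le_of_lt hL0) (by positivity)).2 hsq
        constructor
        · rw [← hE]; exact Real.exp_le_exp.2 (by linarith)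
        · rw [← hE]
          calc Real.exp (-L) ≤ Real.exp 0 := Real.exp_le_exp.2 (by linarith)
            _ ≤ Real.exp s := Real.exp_le_exp.2 hs_nonneg
      · exfalso
        have hg := lemC L (le_of_lt hL1)
        have hden : (0:ℝ) < 3 * (1 + p x) ^ 2 := by positivity
        have hdiv : τ * (3 * (1 + p x) ^ 2) ≤ p x * (1 - p x) :=
          (le_div_iff₀ hden).1 hc1
        have h3τ : p x < 3 * τ := by nlinarith
        nlinarith [mul_le_mul_of_nonneg_right h3τ.le (sq_nonneg (1 + p x)),
          mul_pos hpx hpx, hpx]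
  -- conclude
  have hpr_pos : 0 < p x / r x := div_pos (hp x) (hr x)
  have hqp_pos : 0 < q x / p x := div_pos (hq x) (hp x)
  have heq : q x / r x = (p x / r x) * (q x / p x) := by
    rw [div_mul_div_comm, mul_comm (r x) (p x),
      mul_div_mul_left _ _ (hp x).ne']
  constructor
  · calc γ₁ * Real.exp (-s) ≤ (p x / r x) * Real.exp (-s) :=
        mul_le_mul_of_nonneg_right (hγ x).1 (Real.exp_pos _).le
      _ ≤ (p x / r x) * (q x / p x) :=
        mul_le_mul_of_nonneg_left hmain.1 hpr_pos.le
      _ = q x / r x := heq.symm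
  · calc q x / r x = (p x / r x) * (q x / p x) := heq
      _ ≤ (p x / r x) * Real.exp s := mul_le_mul_of_nonneg_left hmain.2 hpr_pos.le
      _ ≤ γ₂ * Real.exp s := mul_le_mul_of_nonneg_right (hγ x).2 (Real.exp_pos _).le
end

section
/- For 0 < c < 1 and τ > 0, define f(α) = α − ((1−c)/τ)·log((1 − c·exp(−ατ/c))/(1−c)) for α with c·exp(−ατ/c) < 1. If α ≤ 0 and f(α) ≤ 1, then α ≥ −√(2(1−c)c/τ). -/
/-!
Put `t = -ατ/c ≥ 0`, so that `(1 - c·exp(-ατ/c))/(1 - c) = 1 - u` with `u = c(eᵗ - 1)/(1 - c) ∈ [0, 1)`.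
Truncating the series `-log (1 - u) = ∑ uⁿ/n` and `eᵗ = ∑ tⁿ/n!`, all of whose terms are nonnegative,
after their quadratic terms gives `f(α) ≥ τα²/(2(1 - c)c)`; together with `f(α) ≤ 1` this bounds `α²`.
-/

open Real

theorem Real.add_sq_div_two_le_neg_log_one_sub {u : ℝ} (hu0 : 0 ≤ u) (hu1 : u < 1) :
    u + u ^ 2 / 2 ≤ -log (1 - u) := by
  have hsum := Real.hasSum_pow_div_log_of_abs_lt_one (abs_lt.2 ⟨by linarith, hu1⟩)
  have := sum_le_hasSum (Finset.range 2) (fun n _ => by positivity) hsum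
  norm_num [Finset.sum_range_succ] at this
  linarith

theorem mul_add_sq_le_neg_log_of_nonneg {c t : ℝ} (hc0 : 0 < c) (hc1 : c < 1) (ht : 0 ≤ t)
    (hdom : c * exp t < 1) :
    c * t + c * t ^ 2 / (2 * (1 - c)) ≤ -(1 - c) * log ((1 - c * exp t) / (1 - c)) := by
  have h1c : 0 < 1 - c := by linarith
  set u := c * (exp t - 1) / (1 - c) with hu
  have hexp := Real.quadratic_le_exp_of_nonneg ht
  have hu_lin : c * t / (1 - c) ≤ u := by rw [hu]; gcongr; linarith [sq_nonneg t]
  have hu1 : u < 1 := by rw [hu, div_lt_one h1c]; linarith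
  have hu0 : 0 ≤ u := (div_nonneg (by positivity) h1c.le).trans hu_lin
  have hlog := Real.add_sq_div_two_le_neg_log_one_sub hu0 hu1
  have h1u : (1 - c * exp t) / (1 - c) = 1 - u := by rw [hu]; field_simp; ring
  have hcu : c * (t + t ^ 2 / 2) ≤ (1 - c) * u := by
    rw [hu, mul_div_cancel₀ _ h1c.ne']; gcongr; linarith
  have hsq : (c * t / (1 - c)) ^ 2 ≤ u ^ 2 := by gcongr
  calc c * t + c * t ^ 2 / (2 * (1 - c))
      = c * (t + t ^ 2 / 2) + (1 - c) * (c * t / (1 - c)) ^ 2 / 2 := by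
        field_simp; ring
    _ ≤ (1 - c) * u + (1 - c) * u ^ 2 / 2 := by gcongr
    _ = (1 - c) * (u + u ^ 2 / 2) := by ring
    _ ≤ (1 - c) * -log (1 - u) := by gcongr
    _ = -(1 - c) * log ((1 - c * exp t) / (1 - c)) := by rw [h1u]; ring

theorem sq_mul_div_le_of_nonpos {c τ α : ℝ} (hc0 : 0 < c) (hc1 : c < 1) (hτ : 0 < τ)
    (hdom : c * exp (-α * τ / c) < 1) (hα : α ≤ 0) :
    α ^ 2 * τ / (2 * (1 - c) * c) ≤
      α - ((1 - c) / τ) * log ((1 - c * exp (-α * τ / c)) / (1 - c)) := by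
  have h1c : 0 < 1 - c := by linarith
  have key := mul_add_sq_le_neg_log_of_nonneg hc0 hc1
    (div_nonneg (mul_nonneg (neg_nonneg.2 hα) hτ.le) hc0.le) hdom
  calc α ^ 2 * τ / (2 * (1 - c) * c)
      = α + (c * (-α * τ / c) + c * (-α * τ / c) ^ 2 / (2 * (1 - c))) / τ := by
        field_simp; ring
    _ ≤ α + -(1 - c) * log ((1 - c * exp (-α * τ / c)) / (1 - c)) / τ := by gcongr
    _ = _ := by ring

/-- Key one-sided estimate: if `α ≤ 0` and
`f(α) = α - ((1-c)/τ)·log((1 - c·exp(-ατ/c))/(1-c)) ≤ 1`, then `α ≥ -√(2(1-c)c/τ)`. -/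
theorem negative_alpha_bound (c τ α : ℝ)
    (hc0 : 0 < c) (hc1 : c < 1) (hτ : 0 < τ)
    (hdom : c * Real.exp (-α * τ / c) < 1)
    (hα : α ≤ 0)
    (hf : α - ((1 - c) / τ) * Real.log ((1 - c * Real.exp (-α * τ / c)) / (1 - c)) ≤ 1) :
    α ≥ -Real.sqrt (2 * (1 - c) * c / τ) := by
  have hlow := (sq_mul_div_le_of_nonpos hc0 hc1 hτ hdom hα).trans hf
  have hden : 0 < 2 * (1 - c) * c := by nlinarith
  refine Real.neg_sqrt_le_of_sq_le ?_
  rw [div_le_one hden] at hlow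
  rw [le_div_iff₀ hτ]
  linarith
end

section
/- For 0 < c < 1 and 0 < τ ≤ c(1−c)/(3(1+c)²), define f(α) = α − ((1−c)/τ)·log((1 − c·exp(−ατ/c))/(1−c)). If α ≥ 0 and f(α) ≤ 1, then α ≤ √(3(1−c)c/τ). -/
open Real Set

/-! In the variable `x = ατ/c` one has `τ f(α) = g(x)` with `g = rescaledF c`,
`g(x) = c x - (1-c) log((1 - c e^{-x})/(1-c))`, `g(0) = 0` and
`g'(x) = c (1 - e^{-x})/(1 - c e^{-x}) > 0` for `x > 0`. Feeding `x - x²/2 ≤ 1 - e^{-x} ≤ x`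
into `g'` and integrating gives `g(x) ≥ c x²/(2(1-c)) - (1+c) c x³/(6(1-c)²)`, which is at least
`c x²/(3(1-c))` while `(1+c) x ≤ 1-c`. The condition on `τ` makes this applicable at
`α = √(3(1-c)c/τ)`, where it says `f(α) ≥ 1`; since `f` is strictly increasing, `f(α) ≤ 1`
forces `α` below that point. -/

lemma exp_neg_le_one_sub_add_sq_div_two {x : ℝ} (hx : 0 ≤ x) :
    exp (-x) ≤ 1 - x + x ^ 2 / 2 := by
  have hq : 0 < 1 + x + x ^ 2 / 2 := by positivity
  calc exp (-x) = (exp x)⁻¹ := exp_neg x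
    _ ≤ (1 + x + x ^ 2 / 2)⁻¹ := inv_anti₀ hq (quadratic_le_exp_of_nonneg hx)
    _ ≤ 1 - x + x ^ 2 / 2 := by
      rw [inv_le_iff_one_le_mul₀ hq]
      nlinarith [pow_two_nonneg (x ^ 2)]

lemma one_sub_mul_exp_neg_pos {c x : ℝ} (hc : c < 1) (hx : 0 ≤ x) : 0 < 1 - c * exp (-x) := by
  nlinarith [mul_pos (sub_pos.2 hc) (exp_pos (-x)), exp_le_one_iff.2 (neg_nonpos.2 hx)]

noncomputable def rescaledF (c x : ℝ) : ℝ :=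
  c * x - (1 - c) * log ((1 - c * exp (-x)) / (1 - c))

lemma rescaledF_zero {c : ℝ} (hc : c < 1) : rescaledF c 0 = 0 := by
  simp [rescaledF, div_self (sub_pos.2 hc).ne']

lemma hasDerivAt_rescaledF {c x : ℝ} (hc : c < 1) (hx : 0 ≤ x) :
    HasDerivAt (rescaledF c) (c * (1 - exp (-x)) / (1 - c * exp (-x))) x := by
  have hpos := one_sub_mul_exp_neg_pos hc hx
  have hexp : HasDerivAt (fun t => exp (-t)) (-exp (-x)) x := by
    simpa using (hasDerivAt_neg x).exp
  have hlog := (((hexp.const_mul c).const_sub 1).div_const (1 - c)).log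
    (div_pos hpos (sub_pos.2 hc)).ne'
  refine (((hasDerivAt_id' x).const_mul c).sub (hlog.const_mul (1 - c))).congr_deriv ?_
  field_simp [(sub_pos.2 hc).ne']
  ring

lemma strictMonoOn_rescaledF {c : ℝ} (hc0 : 0 < c) (hc1 : c < 1) :
    StrictMonoOn (rescaledF c) (Ici 0) := by
  refine strictMonoOn_of_deriv_pos (convex_Ici 0)
    (fun x hx => (hasDerivAt_rescaledF hc1 hx).continuousAt.continuousWithinAt) ?_
  intro x hx
  rw [interior_Ici] at hx
  rw [(hasDerivAt_rescaledF hc1 (le_of_lt hx)).deriv]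
  have : exp (-x) < 1 := exp_lt_one_iff.2 (neg_lt_zero.2 hx)
  exact div_pos (mul_pos hc0 (by linarith)) (one_sub_mul_exp_neg_pos hc1 (le_of_lt hx))

lemma quadratic_le_deriv_rescaledF {c x : ℝ} (hc0 : 0 ≤ c) (hc1 : c < 1) (hx : 0 ≤ x) :
    c * x / (1 - c) - (1 + c) * c * x ^ 2 / (2 * (1 - c) ^ 2) ≤
      c * (1 - exp (-x)) / (1 - c * exp (-x)) := by
  set u := 1 - exp (-x)
  have hu0 : 0 ≤ u := by linarith [exp_le_one_iff.2 (neg_nonpos.2 hx)]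
  have hux : u ≤ x := by linarith [one_sub_le_exp_neg x]
  have hxu : x - x ^ 2 / 2 ≤ u := by linarith [exp_neg_le_one_sub_add_sq_div_two hx]
  have hd : 0 < 1 - c := sub_pos.2 hc1
  have hden : 1 - c * exp (-x) = (1 - c) + c * u := by ring
  have hkey : (1 - c) * x - (1 + c) * x ^ 2 / 2 ≤ (1 - c) * u - c * u ^ 2 := by
    nlinarith [mul_le_mul hux hux hu0 hx]
  calc c * x / (1 - c) - (1 + c) * c * x ^ 2 / (2 * (1 - c) ^ 2)
      = c * ((1 - c) * x - (1 + c) * x ^ 2 / 2) / (1 - c) ^ 2 := by field_simp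
    _ ≤ c * ((1 - c) * u - c * u ^ 2) / (1 - c) ^ 2 := by gcongr
    _ ≤ c * u / (1 - c * exp (-x)) := by
      rw [hden, div_le_div_iff₀ (by positivity) (by positivity)]
      nlinarith [pow_nonneg (mul_nonneg hc0 hu0) 3]

lemma cubic_le_rescaledF {c x : ℝ} (hc0 : 0 ≤ c) (hc1 : c < 1) (hx : 0 ≤ x) :
    c * x ^ 2 / (2 * (1 - c)) - (1 + c) * c * x ^ 3 / (6 * (1 - c) ^ 2) ≤ rescaledF c x := by
  have hd : (1 - c) ≠ 0 := (sub_pos.2 hc1).ne'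
  have hP : ∀ t, HasDerivAt
      (fun t => c * t ^ 2 / (2 * (1 - c)) - (1 + c) * c * t ^ 3 / (6 * (1 - c) ^ 2))
      (c * t / (1 - c) - (1 + c) * c * t ^ 2 / (2 * (1 - c) ^ 2)) t := fun t => by
    refine ((((hasDerivAt_pow 2 t).const_mul c).div_const (2 * (1 - c))).sub
      (((hasDerivAt_pow 3 t).const_mul ((1 + c) * c)).div_const (6 * (1 - c) ^ 2))).congr_deriv ?_
    field_simp
    ring
  have hmono : MonotoneOn (rescaledF c -
      fun t => c * t ^ 2 / (2 * (1 - c)) - (1 + c) * c * t ^ 3 / (6 * (1 - c) ^ 2)) (Ici 0) := by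
    refine monotoneOn_of_deriv_nonneg (convex_Ici 0)
      (fun t ht => ((hasDerivAt_rescaledF hc1 ht).sub (hP t)).continuousAt.continuousWithinAt)
      (fun t ht => ?_) (fun t ht => ?_) <;> rw [interior_Ici] at ht
    · exact ((hasDerivAt_rescaledF hc1 (le_of_lt ht)).sub (hP t)).differentiableAt
        |>.differentiableWithinAt
    · rw [((hasDerivAt_rescaledF hc1 (le_of_lt ht)).sub (hP t)).deriv, sub_nonneg]
      exact quadratic_le_deriv_rescaledF hc0 hc1 (le_of_lt ht)
  simpa [rescaledF_zero hc1] using hmono self_mem_Ici hx hx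

lemma quadratic_le_rescaledF {c x : ℝ} (hc0 : 0 ≤ c) (hc1 : c < 1) (hx : 0 ≤ x)
    (hxc : (1 + c) * x ≤ 1 - c) : c * x ^ 2 / (3 * (1 - c)) ≤ rescaledF c x := by
  refine le_trans ?_ (cubic_le_rescaledF hc0 hc1 hx)
  have hd : 0 < 1 - c := sub_pos.2 hc1
  have hgap : c * x ^ 2 / (2 * (1 - c)) - (1 + c) * c * x ^ 3 / (6 * (1 - c) ^ 2) -
      c * x ^ 2 / (3 * (1 - c)) = c * x ^ 2 * ((1 - c) - (1 + c) * x) / (6 * (1 - c) ^ 2) := by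
    field_simp
    ring
  have : 0 ≤ c * x ^ 2 * ((1 - c) - (1 + c) * x) / (6 * (1 - c) ^ 2) := by
    have := sub_nonneg.2 hxc
    positivity
  linarith

lemma rescaledF_mul_div {c τ : ℝ} (hc : c ≠ 0) (hτ : τ ≠ 0) (α : ℝ) :
    rescaledF c (α * τ / c) =
      τ * (α - ((1 - c) / τ) * log ((1 - c * exp (-α * τ / c)) / (1 - c))) := by
  rw [rescaledF, ← neg_div, ← neg_mul]
  field_simp

lemma one_add_mul_sqrt_mul_div_le {c τ : ℝ} (hc0 : 0 < c) (hc1 : c < 1) (hτ0 : 0 < τ)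
    (hτ : τ ≤ c * (1 - c) / (3 * (1 + c) ^ 2)) :
    (1 + c) * (√(3 * (1 - c) * c / τ) * τ / c) ≤ 1 - c := by
  set S := √(3 * (1 - c) * c / τ)
  have hd : 0 < 1 - c := sub_pos.2 hc1
  have hS_sq : S ^ 2 = 3 * (1 - c) * c / τ := sq_sqrt (by positivity)
  have hτ' : 3 * (1 + c) ^ 2 * τ ≤ c * (1 - c) := by
    rwa [le_div_iff₀ (by positivity), mul_comm] at hτ
  have hsq : ((1 + c) * S * τ) ^ 2 ≤ (c * (1 - c)) ^ 2 :=
    calc ((1 + c) * S * τ) ^ 2 = 3 * (1 + c) ^ 2 * τ * (c * (1 - c)) := by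
          rw [mul_pow, mul_pow, hS_sq]; field_simp
      _ ≤ (c * (1 - c)) ^ 2 := by
          rw [sq (c * (1 - c))]; exact mul_le_mul_of_nonneg_right hτ' (by positivity)
  rw [pow_le_pow_iff_left₀ (by positivity) (by positivity) two_ne_zero] at hsq
  rw [← mul_div_assoc, div_le_iff₀ hc0, ← mul_assoc]
  linarith

/-- Other one-sided estimate: if `0 < τ ≤ c(1-c)/(3(1+c)²)`, `α ≥ 0` and
`f(α) = α - ((1-c)/τ)·log((1 - c·exp(-ατ/c))/(1-c)) ≤ 1`, then `α ≤ √(3(1-c)c/τ)`. -/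
theorem positive_alpha_bound (c τ α : ℝ)
    (hc0 : 0 < c) (hc1 : c < 1) (hτ0 : 0 < τ)
    (hτ : τ ≤ c * (1 - c) / (3 * (1 + c) ^ 2))
    (hα : 0 ≤ α)
    (hf : α - ((1 - c) / τ) * Real.log ((1 - c * Real.exp (-α * τ / c)) / (1 - c)) ≤ 1) :
    α ≤ Real.sqrt (3 * (1 - c) * c / τ) := by
  set S := √(3 * (1 - c) * c / τ)
  have hd : 0 < 1 - c := sub_pos.2 hc1
  have hS_sq : S ^ 2 = 3 * (1 - c) * c / τ := sq_sqrt (by positivity)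
  have hfα : rescaledF c (α * τ / c) ≤ τ := by
    rw [rescaledF_mul_div hc0.ne' hτ0.ne']
    simpa using mul_le_mul_of_nonneg_left hf hτ0.le
  by_contra! hlt
  have hτ_le : τ ≤ rescaledF c (S * τ / c) :=
    calc τ = c * (S * τ / c) ^ 2 / (3 * (1 - c)) := by
          rw [div_pow, mul_pow, hS_sq]
          field_simp
      _ ≤ rescaledF c (S * τ / c) := quadratic_le_rescaledF hc0.le hc1 (by positivity)
          (one_add_mul_sqrt_mul_div_le hc0 hc1 hτ0 hτ)
  have := strictMonoOn_rescaledF hc0 hc1 (by positivity : 0 ≤ S * τ / c)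
    (by positivity : 0 ≤ α * τ / c) (by gcongr)
  linarith
end
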